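/- arXiv:0905.2863 — 5 statements merged into one kernel-verified Lean document; each statement's English description precedes it below -/
import Mathlib

section
/- Let q ≥ 1 and q - 1 ≤ a ≤ q be reals, and let λ⁺, λ⁻ be the roots of X² - (z + 2 + a)X + (z + q + 1) = 0. If |λ⁺| = |λ⁻| and λ⁺ ≠ conj(λ⁻) (i.e. the common modulus ρ ≠ 1 case with λ⁺ = 1 + √(q-a)·ρe^{iα}, λ⁻ = 1 + √(q-a)·ρ^{-1}e^{-iα}, ρ ≠ 1), then |z + q + 1| = 1 - q + a. -/
/-!
By Vieta, `λ⁺ λ⁻ = z + q + 1` and `λ⁺ + λ⁻ - λ⁺ λ⁻ = 1 - q + a`, so with `x = λ⁺`, `y = λ⁻`,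
`c = 1 - q + a` it suffices to show `‖x‖² = c`. Write `N = ‖x‖² = x x̄ = y ȳ`. Conjugating
the real relation `x + y - x y = c` and multiplying by `x y` gives `N (x + y) - N² = c x y`;
substituting `x + y = c + x y` factors this as `(N - c) (x y - N) = 0`. The second factor
vanishing means `x y = x x̄`, i.e. `x = ȳ` (also when `x = 0`, since then `y = 0`).
-/

open ComplexConjugate

theorem Complex.normSq_eq_of_add_sub_mul_eq_ofReal {x y : ℂ} {c : ℝ}
    (h : x + y - x * y = c) (hxy : normSq x = normSq y) (hne : x ≠ conj y) :
    normSq x = c := by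
  have hx : x * conj x = normSq x := mul_conj x
  have hy : y * conj y = normSq x := by rw [hxy]; exact mul_conj y
  have hconj : conj x + conj y - conj x * conj y = c := by
    simpa using congrArg conj h
  have hfactor : ((normSq x : ℂ) - c) * (x * y - normSq x) = 0 := by
    linear_combination (x * y) * hconj + (y * conj y - y) * hx + (normSq x - x) * hy - normSq x * h
  rcases mul_eq_zero.mp hfactor with hN | hprod
  · exact_mod_cast sub_eq_zero.mp hN
  · have hconj_root : x * (y - conj x) = 0 := by linear_combination hprod - hx
    rcases mul_eq_zero.mp hconj_root with rfl | hy_eq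
    · have hy0 : y = 0 := normSq_eq_zero.mp (by rw [← hxy, normSq_zero])
      exact absurd (by rw [hy0, map_zero]) hne
    · exact absurd (by rw [sub_eq_zero.mp hy_eq, conj_conj]) hne

theorem stmt2_general (q a : ℝ) (z lp lm : ℂ)
    (hroot : ∀ X : ℂ, X^2 - (z + 2 + (a:ℂ))*X + (z + (q:ℂ) + 1) = (X - lp)*(X - lm))
    (habs : ‖lp‖ = ‖lm‖)
    (hnc : lp ≠ (starRingEnd ℂ) lm) :
    ‖z + (q:ℂ) + 1‖ = 1 - q + a := by
  have hprod : z + (q:ℂ) + 1 = lp * lm := by linear_combination hroot 0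
  have hsum : lp + lm - lp * lm = ((1 - q + a : ℝ) : ℂ) := by
    push_cast
    linear_combination hroot 1
  have hnormSq : Complex.normSq lp = Complex.normSq lm := by
    simp only [← Complex.sq_norm, habs]
  rw [hprod, norm_mul, ← habs, ← sq, Complex.sq_norm]
  exact Complex.normSq_eq_of_add_sub_mul_eq_ofReal hsum hnormSq hnc

/-- For `q ≥ 1`, `q-1 ≤ a ≤ q`: if the roots of `X² - (z+2+a)X + (z+q+1) = 0` have equal
modulus and are not conjugate (the `ρ ≠ 1` case), then `|z+q+1| = 1-q+a`. -/
theorem stmt2 (q a : ℝ) (hq : 1 ≤ q) (ha1 : q - 1 ≤ a) (haq : a ≤ q) (z lp lm : ℂ)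
    (hroot : ∀ X : ℂ, X^2 - (z + 2 + (a:ℂ))*X + (z + (q:ℂ) + 1) = (X - lp)*(X - lm))
    (habs : ‖lp‖ = ‖lm‖)
    (hnc : lp ≠ (starRingEnd ℂ) lm) :
    ‖z + (q:ℂ) + 1‖ = 1 - q + a :=
  stmt2_general q a z lp lm hroot habs hnc
end

section
/- Let q ≥ 1 and a ∈ [0, q] be real, and suppose λ is a root of X² - (z + 2 + a)X + (z + q + 1) = 0 with |λ| = 1, say λ = e^{iα}. Then writing z = c + id, one has c = cos α - 1 - (q+a)/2 and d = sin α·(1 - (q-a)/(2 - 2cos α)) (assuming cos α ≠ 1); consequently d² = -(c+q)²·(2c+q+4+a)/(2c+q+a) whenever 2c + q + a ≠ 0. -/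
/-!
Since `λ ≠ 1`, the quadratic factors as `(λ - 1)(λ - 1 - a - z) + (q - a)`, so
`z = λ - 1 - a + (q - a)/(λ - 1)`. For `λ = e^{iα}` one has `|λ - 1|² = 2 - 2cos α`, hence
`Re (λ - 1)⁻¹ = -1/2` and `Im (λ - 1)⁻¹ = -sin α/(2 - 2cos α)`, which gives `c` and `d`.
The formula for `d²` follows by eliminating `α` with `sin² α + cos² α = 1`.
-/

open Complex

lemma quadratic_eq_zero_iff_eq_sub_add_div {K : Type*} [Field K] {l z a q : K} (hl : l ≠ 1) :
    l ^ 2 - (z + 2 + a) * l + (z + q + 1) = 0 ↔ z = l - 1 - a + (q - a) / (l - 1) := by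
  have hl' : l - 1 ≠ 0 := sub_ne_zero.mpr hl
  have hfactor : l ^ 2 - (z + 2 + a) * l + (z + q + 1)
      = (l - 1) * (l - 1 - a + (q - a) / (l - 1) - z) := by
    field_simp
    ring
  rw [hfactor, mul_eq_zero, or_iff_right hl', sub_eq_zero, eq_comm]

lemma exp_mul_I_ne_one {α : ℝ} (h : Real.cos α ≠ 1) : exp (α * I) ≠ 1 := by
  intro h1
  exact h (by simpa [exp_ofReal_mul_I_re] using congrArg re h1)

lemma normSq_exp_mul_I_sub_one (α : ℝ) : normSq (exp (α * I) - 1) = 2 - 2 * Real.cos α := by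
  rw [normSq_apply]
  simp only [sub_re, sub_im, exp_ofReal_mul_I_re, exp_ofReal_mul_I_im, one_re, one_im]
  linear_combination Real.sin_sq_add_cos_sq α

lemma re_inv_exp_mul_I_sub_one {α : ℝ} (h : Real.cos α ≠ 1) :
    (exp (α * I) - 1)⁻¹.re = -1 / 2 := by
  have : 2 - 2 * Real.cos α ≠ 0 := fun h0 => h (by linarith)
  rw [inv_re, normSq_exp_mul_I_sub_one]
  simp only [sub_re, exp_ofReal_mul_I_re, one_re]
  field_simp
  ring

lemma im_inv_exp_mul_I_sub_one (α : ℝ) :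
    (exp (α * I) - 1)⁻¹.im = -Real.sin α / (2 - 2 * Real.cos α) := by
  rw [inv_im, normSq_exp_mul_I_sub_one]
  simp [exp_ofReal_mul_I_im]

lemma re_im_eq_of_eq_exp_mul_I_sub_add_div {c d q a α : ℝ} (hcos : Real.cos α ≠ 1)
    (hz : (c : ℂ) + d * I = exp (α * I) - 1 - a + (q - a) / (exp (α * I) - 1)) :
    c = Real.cos α - 1 - (q + a) / 2 ∧
      d = Real.sin α * (1 - (q - a) / (2 - 2 * Real.cos α)) := by
  rw [div_eq_mul_inv, ← ofReal_sub] at hz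
  have hc := congrArg re hz
  have hd := congrArg im hz
  simp only [add_re, add_im, sub_re, sub_im, mul_re, mul_im, ofReal_re, ofReal_im, I_re, I_im,
    one_re, one_im, exp_ofReal_mul_I_re, exp_ofReal_mul_I_im, re_inv_exp_mul_I_sub_one hcos,
    im_inv_exp_mul_I_sub_one] at hc hd
  exact ⟨by linear_combination hc, by linear_combination hd⟩

lemma sq_eq_of_eq_cos_of_eq_sin {c d q a α : ℝ} (hcos : Real.cos α ≠ 1)
    (hc : c = Real.cos α - 1 - (q + a) / 2)
    (hd : d = Real.sin α * (1 - (q - a) / (2 - 2 * Real.cos α))) :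
    d ^ 2 = -(c + q) ^ 2 * (2 * c + q + 4 + a) / (2 * c + q + a) := by
  have h1 : 1 - Real.cos α ≠ 0 := sub_ne_zero.mpr (Ne.symm hcos)
  have hd' : d = -Real.sin α * (c + q) / (1 - Real.cos α) := by
    rw [hd, hc]; field_simp; ring
  have hden : 2 * c + q + a = -2 * (1 - Real.cos α) := by rw [hc]; ring
  have hnum : 2 * c + q + 4 + a = 2 * (1 + Real.cos α) := by rw [hc]; ring
  rw [hd', hden, hnum]
  field_simp
  linear_combination (c + q) ^ 2 * Real.sin_sq_add_cos_sq α

theorem stmt10_general (q a : ℝ)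
    (c d α : ℝ) (hcos : Real.cos α ≠ 1)
    (hroot : Complex.exp ((α:ℂ) * Complex.I)^2
        - (((c:ℂ) + (d:ℂ)*Complex.I) + 2 + (a:ℂ)) * Complex.exp ((α:ℂ) * Complex.I)
        + (((c:ℂ) + (d:ℂ)*Complex.I) + (q:ℂ) + 1) = 0) :
    c = Real.cos α - 1 - (q + a)/2 ∧
    d = Real.sin α * (1 - (q - a)/(2 - 2*Real.cos α)) ∧
    (2*c + q + a ≠ 0 → d^2 = -(c + q)^2 * (2*c + q + 4 + a)/(2*c + q + a)) := by
  have hz := (quadratic_eq_zero_iff_eq_sub_add_div (exp_mul_I_ne_one hcos)).1 hroot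
  obtain ⟨hc, hd⟩ := re_im_eq_of_eq_exp_mul_I_sub_add_div hcos hz
  exact ⟨hc, hd, fun _ => sq_eq_of_eq_cos_of_eq_sin hcos hc hd⟩

/-- If `e^{iα}` (with `cos α ≠ 1`) is a root of `X² - (z+2+a)X + (z+q+1) = 0` for
`z = c + id`, then `c = cos α - 1 - (q+a)/2`, `d = sin α (1 - (q-a)/(2-2cos α))`, and
consequently `d² = -(c+q)²(2c+q+4+a)/(2c+q+a)` whenever `2c+q+a ≠ 0`. -/
theorem stmt10 (q a : ℝ) (hq : 1 ≤ q) (ha0 : 0 ≤ a) (haq : a ≤ q)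
    (c d α : ℝ) (hcos : Real.cos α ≠ 1)
    (hroot : Complex.exp ((α:ℂ) * Complex.I)^2
        - (((c:ℂ) + (d:ℂ)*Complex.I) + 2 + (a:ℂ)) * Complex.exp ((α:ℂ) * Complex.I)
        + (((c:ℂ) + (d:ℂ)*Complex.I) + (q:ℂ) + 1) = 0) :
    c = Real.cos α - 1 - (q + a)/2 ∧
    d = Real.sin α * (1 - (q - a)/(2 - 2*Real.cos α)) ∧
    (2*c + q + a ≠ 0 → d^2 = -(c + q)^2 * (2*c + q + 4 + a)/(2*c + q + a)) :=
  stmt10_general q a c d α hcos hroot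
end

section
/- Let q ≥ 1, 0 ≤ a ≤ q, and let z = c + id with d ≠ 0 and (either c > -a or c < -a-2). If λ⁺, λ⁻ are the roots of X² - (z+2+a)X + (z+q+1) = 0, then |λ⁺| ≠ |λ⁻|. -/
/-! If `‖λ⁺‖ = ‖λ⁻‖`, then `(λ⁺ + λ⁻)² / (λ⁺λ⁻) = 2 + λ⁺/λ⁻ + λ⁻/λ⁺ = 2 + 2 Re (λ⁺/λ⁻)` is a real
number `t ∈ [0, 4]`. By Vieta this says `(z + 2 + a)² = t (z + q + 1)`, and comparing imaginary
parts (`Im z = d ≠ 0`) gives `2 (c + 2 + a) = t ∈ [0, 4]`, i.e. `-a - 2 ≤ c ≤ -a`. -/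

open Complex ComplexConjugate

theorem add_eq_and_mul_eq_of_forall_sq_sub_eq {R : Type*} [CommRing R] {b c x y : R}
    (h : ∀ X : R, X ^ 2 - b * X + c = (X - x) * (X - y)) : b = x + y ∧ c = x * y := by
  have h0 := h 0
  have h1 := h 1
  exact ⟨by linear_combination h0 - h1, by linear_combination h0⟩

theorem Complex.exists_sq_add_eq_mul_of_norm_eq {x y : ℂ} (h : ‖x‖ = ‖y‖) :
    ∃ t : ℝ, t ∈ Set.Icc 0 4 ∧ (x + y) ^ 2 = t * (x * y) := by
  rcases eq_or_ne y 0 with rfl | hy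
  · exact ⟨0, by norm_num, by simp_all⟩
  have hpos : 0 < ‖y‖ ^ 2 := by positivity
  set r := (x * conj y).re / ‖y‖ ^ 2
  have hr : |r| ≤ 1 := by
    rw [abs_div, abs_of_pos hpos, div_le_one hpos]
    simpa [h, sq] using abs_re_le_norm (x * conj y)
  refine ⟨2 + 2 * r, by constructor <;> linarith [abs_le.mp hr], ?_⟩
  have hx2 : conj x * x = (‖y‖ : ℂ) ^ 2 := by rw [conj_mul', h]
  have hy2 : conj y * y = (‖y‖ : ℂ) ^ 2 := conj_mul' y
  have hy0 : (‖y‖ : ℂ) ≠ 0 := by simpa using hy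
  simp only [r, ofReal_add, ofReal_mul, ofReal_div, ofReal_pow, ofReal_ofNat, re_eq_add_conj,
    map_mul, conj_conj]
  field_simp
  linear_combination (-x ^ 2) * hy2 - y ^ 2 * hx2

theorem Complex.two_mul_re_eq_of_sq_eq_ofReal_mul {S P : ℂ} {t : ℝ} (h : S ^ 2 = t * P)
    (him : S.im = P.im) (hP : P.im ≠ 0) : 2 * S.re = t := by
  have := congrArg im h
  simp only [sq, mul_im, ofReal_re, ofReal_im, zero_mul, add_zero, him] at this
  exact mul_right_cancel₀ hP (by linarith)

theorem stmt14_general (q a : ℝ)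
    (c d : ℝ) (hd : d ≠ 0) (hc : -a < c ∨ c < -a - 2) (lp lm : ℂ)
    (hroot : ∀ X : ℂ,
      X^2 - (((c:ℂ) + (d:ℂ)*Complex.I) + 2 + (a:ℂ))*X
        + (((c:ℂ) + (d:ℂ)*Complex.I) + (q:ℂ) + 1) = (X - lp)*(X - lm)) :
    ‖lp‖ ≠ ‖lm‖ := by
  intro hnorm
  obtain ⟨hsum, hprod⟩ := add_eq_and_mul_eq_of_forall_sq_sub_eq hroot
  obtain ⟨t, ⟨ht0, ht4⟩, ht⟩ := exists_sq_add_eq_mul_of_norm_eq hnorm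
  rw [← hsum, ← hprod] at ht
  have hre : 2 * (c + 2 + a) = t := by
    simpa using two_mul_re_eq_of_sq_eq_ofReal_mul ht (by simp) (by simpa using hd)
  rcases hc with hc | hc <;> linarith

/-- For `q ≥ 1`, `0 ≤ a ≤ q`, `z = c + id` with `d ≠ 0` and `c` outside the strip
`[-a-2, -a]`, the roots of `X² - (z+2+a)X + (z+q+1) = 0` have distinct moduli. -/
theorem stmt14 (q a : ℝ) (hq : 1 ≤ q) (ha0 : 0 ≤ a) (haq : a ≤ q)
    (c d : ℝ) (hd : d ≠ 0) (hc : -a < c ∨ c < -a - 2) (lp lm : ℂ)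
    (hroot : ∀ X : ℂ,
      X^2 - (((c:ℂ) + (d:ℂ)*Complex.I) + 2 + (a:ℂ))*X
        + (((c:ℂ) + (d:ℂ)*Complex.I) + (q:ℂ) + 1) = (X - lp)*(X - lm)) :
    ‖lp‖ ≠ ‖lm‖ :=
  stmt14_general q a c d hd hc lp lm hroot
end

section
/- Let q ∈ [1, 2]. For z ∈ ℂ with z on the circle |z + q + 1| = 2 - q, the roots λ⁺, λ⁻ of X² - (z+3)X + (z+q+1) = 0 satisfy |λ⁺| = |λ⁻| or z is real with z ∈ [-1-2√(q-1), -1+2√(q-1)]. -/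
/-!
With `w = z + q + 1`, so that `‖w‖ = 2 - q`, the roots have sum `w + ‖w‖` and product `w`.
For such roots `a, b`, the number `t = (a - b) * conj (a + b)` has `Re t = ‖a‖² - ‖b‖²` and
`t² = 4 ‖w‖² x (x - 2)` with `x = Re w + ‖w‖ ∈ [0, 2]`. Hence `t²` is a nonpositive real,
`t` is purely imaginary, and `‖a‖ = ‖b‖`.
-/

namespace Complex

open ComplexConjugate ComplexOrder

theorem re_mul_conj_add_eq_sq_norm_sub (a b : ℂ) :
    ((a - b) * conj (a + b)).re = ‖a‖ ^ 2 - ‖b‖ ^ 2 := by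
  simp only [← normSq_eq_norm_sq, normSq_apply, mul_re, sub_re, sub_im, map_add, add_re, add_im,
    conj_re, conj_im]
  ring

theorem mul_sq_conj_add_norm (w : ℂ) :
    w * (conj w + ‖w‖) ^ 2 = (2 * ‖w‖ ^ 2 * (w.re + ‖w‖) : ℝ) := by
  have h := add_conj w
  push_cast at h ⊢
  linear_combination (conj w + 2 * ‖w‖) * mul_conj' w + (‖w‖ : ℂ) ^ 2 * h

theorem norm_eq_norm_of_add_eq_of_mul_eq {w a b : ℂ} (hw : w.re + ‖w‖ ≤ 2)
    (hsum : a + b = w + ‖w‖) (hprod : a * b = w) : ‖a‖ = ‖b‖ := by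
  have hdisc : (a - b) ^ 2 = (2 * (w.re + ‖w‖ - 2) : ℝ) * w := by
    have h := add_conj w
    push_cast at h ⊢
    linear_combination (a + b + w + ‖w‖) * hsum - 4 * hprod - mul_conj' w + w * h
  have hsq : ((a - b) * conj (a + b)) ^ 2
      = (4 * ‖w‖ ^ 2 * (w.re + ‖w‖) * (w.re + ‖w‖ - 2) : ℝ) := by
    rw [mul_pow, hdisc, hsum, map_add, conj_ofReal, mul_assoc, mul_sq_conj_add_norm, ← ofReal_mul]
    ring_nf
  have hnonneg : 0 ≤ w.re + ‖w‖ := by linarith [neg_abs_le w.re, abs_re_le_norm w]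
  have hnonpos : ((a - b) * conj (a + b)) ^ 2 ≤ 0 := by
    rw [hsq, ← ofReal_zero, real_le_real]
    have := mul_nonpos_of_nonneg_of_nonpos hnonneg (sub_nonpos.mpr hw)
    nlinarith [sq_nonneg ‖w‖]
  have hre := sq_nonpos_iff.mp hnonpos
  rw [re_mul_conj_add_eq_sq_norm_sub, sub_eq_zero] at hre
  exact (sq_eq_sq₀ (norm_nonneg a) (norm_nonneg b)).mp hre

end Complex

theorem stmt15_general (q : ℝ) (hq1 : 1 ≤ q) (z lp lm : ℂ)
    (hz : ‖z + (q:ℂ) + 1‖ = 2 - q)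
    (hroot : ∀ X : ℂ, X^2 - (z + 3)*X + (z + (q:ℂ) + 1) = (X - lp)*(X - lm)) :
    ‖lp‖ = ‖lm‖ ∨
      (z.im = 0 ∧ -1 - 2*Real.sqrt (q - 1) ≤ z.re ∧ z.re ≤ -1 + 2*Real.sqrt (q - 1)) := by
  left
  have hprod : lp * lm = z + q + 1 := by linear_combination -hroot 0
  have hsum : lp + lm = z + q + 1 + ‖z + q + 1‖ := by
    rw [hz]
    push_cast
    linear_combination hroot 1 + hprod
  refine Complex.norm_eq_norm_of_add_eq_of_mul_eq ?_ hsum hprod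
  linarith [Complex.re_le_norm (z + q + 1)]

/-- For `q ∈ [1,2]` and `z` on the circle `|z+q+1| = 2-q`, the roots of
`X² - (z+3)X + (z+q+1) = 0` have equal modulus, or `z` is real with
`z ∈ [-1-2√(q-1), -1+2√(q-1)]`. -/
theorem stmt15 (q : ℝ) (hq1 : 1 ≤ q) (hq2 : q ≤ 2) (z lp lm : ℂ)
    (hz : ‖z + (q:ℂ) + 1‖ = 2 - q)
    (hroot : ∀ X : ℂ, X^2 - (z + 3)*X + (z + (q:ℂ) + 1) = (X - lp)*(X - lm)) :
    ‖lp‖ = ‖lm‖ ∨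
      (z.im = 0 ∧ -1 - 2*Real.sqrt (q - 1) ≤ z.re ∧ z.re ≤ -1 + 2*Real.sqrt (q - 1)) :=
  stmt15_general q hq1 z lp lm hz hroot
end

section
/- Let q ∈ [1, 5], z = c + id ∈ ℂ, and let λ⁺, λ⁻ be the roots of X² - (z+3)X + (z+q+1) = 0 (the a = 1 case). If some root λ satisfies |λ| = 1 and λ ≠ 1, then c ∈ [-(q+5)/2, -(q+1)/2] and d² = -(c+q)²·(2c+q+5)/(2c+q+1) (provided 2c+q+1 ≠ 0). -/
/-!
Write the unit-modulus root as `λ = x + iy` with `x² + y² = 1` and `x ≠ 1`. Modulo `x² + y² = 1`,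
the real and imaginary parts of the quadratic combine to `(1 - x)(2c + q + 3 - 2x) = 0`, so
`2x = 2c + q + 3`, and `|x| ≤ 1` places `c` in the stated interval. The imaginary part then reads
`d(1 - x) = -y(c + q)`; squaring and using `y² = (1 - x)(1 + x)` gives `d²(1 - x) = (1 + x)(c + q)²`,
which is the stated curve once `x` is eliminated.
-/

namespace Complex

lemma re_ne_one_of_norm_eq_one {w : ℂ} (hw : ‖w‖ = 1) (hne : w ≠ 1) : w.re ≠ 1 := by
  intro hre
  obtain ⟨-, him⟩ := nonneg_iff.mp (re_eq_norm.mp (hre.trans hw.symm))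
  exact hne (ext hre him.symm)

lemma re_sq_add_im_sq_of_norm_eq_one {w : ℂ} (hw : ‖w‖ = 1) : w.re ^ 2 + w.im ^ 2 = 1 := by
  have h := Complex.sq_norm w
  rw [hw, normSq_apply] at h
  linear_combination -h

lemma re_im_of_quadratic_eq_zero {q : ℝ} {z w : ℂ} (h : w ^ 2 - (z + 3) * w + (z + q + 1) = 0) :
    w.re ^ 2 - w.im ^ 2 - ((z.re + 3) * w.re - z.im * w.im) + (z.re + q + 1) = 0 ∧
      2 * w.re * w.im - ((z.re + 3) * w.im + z.im * w.re) + z.im = 0 := by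
  have hre := congrArg re h
  have him := congrArg im h
  simp only [sq, sub_re, add_re, mul_re, sub_im, add_im, mul_im, ofReal_re, ofReal_im, re_ofNat,
    im_ofNat, one_re, one_im, zero_re, zero_im] at hre him
  constructor <;> linarith

end Complex

section UnitRoot

variable {q c d x y : ℝ}

lemma two_mul_eq_of_unit_root (hxy : x ^ 2 + y ^ 2 = 1) (hx : x ≠ 1)
    (hre : x ^ 2 - y ^ 2 - ((c + 3) * x - d * y) + (c + q + 1) = 0)
    (him : 2 * x * y - ((c + 3) * y + d * x) + d = 0) :
    2 * x = 2 * c + q + 3 := by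
  have key : (1 - x) * (2 * c + q + 3 - 2 * x) = 0 := by
    linear_combination (1 - x) * hre - y * him + (x - c - 2) * hxy
  have h1x : 1 - x ≠ 0 := sub_ne_zero.mpr hx.symm
  linarith [(mul_eq_zero.mp key).resolve_left h1x]

lemma im_sq_mul_eq_of_unit_root (hxy : x ^ 2 + y ^ 2 = 1) (hx : x ≠ 1)
    (him : 2 * x * y - ((c + 3) * y + d * x) + d = 0) (h2x : 2 * x = 2 * c + q + 3) :
    d ^ 2 * (2 * c + q + 1) = -(c + q) ^ 2 * (2 * c + q + 5) := by
  have hd : d * (1 - x) = -(y * (c + q)) := by linear_combination him - y * h2x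
  have key : (1 - x) * (d ^ 2 * (1 - x) - (1 + x) * (c + q) ^ 2) = 0 := by
    linear_combination (d * (1 - x) - y * (c + q)) * hd + (c + q) ^ 2 * hxy
  have hd2 := (mul_eq_zero.mp key).resolve_left (sub_ne_zero.mpr hx.symm)
  linear_combination (-2) * hd2 - (d ^ 2 + (c + q) ^ 2) * h2x

end UnitRoot

theorem stmt19_general (q : ℝ) (c d : ℝ) (lp lm lam : ℂ)
    (hroot : ∀ X : ℂ,
      X^2 - (((c:ℂ) + (d:ℂ)*Complex.I) + 3)*X
        + (((c:ℂ) + (d:ℂ)*Complex.I) + (q:ℂ) + 1) = (X - lp)*(X - lm))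
    (hmem : lam = lp ∨ lam = lm) (habs : ‖lam‖ = 1) (hne : lam ≠ 1) :
    -(q + 5)/2 ≤ c ∧ c ≤ -(q + 1)/2 ∧
    (2*c + q + 1 ≠ 0 → d^2 = -(c + q)^2*(2*c + q + 5)/(2*c + q + 1)) := by
  have hlam : lam ^ 2 - (((c:ℂ) + d * Complex.I) + 3) * lam
      + (((c:ℂ) + d * Complex.I) + q + 1) = 0 := by
    rw [hroot]
    rcases hmem with rfl | rfl <;> ring
  have hzre : ((c:ℂ) + d * Complex.I).re = c := by simp
  have hzim : ((c:ℂ) + d * Complex.I).im = d := by simp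
  obtain ⟨hre, him⟩ := Complex.re_im_of_quadratic_eq_zero hlam
  rw [hzre, hzim] at hre him
  have hxy := Complex.re_sq_add_im_sq_of_norm_eq_one habs
  have hx := Complex.re_ne_one_of_norm_eq_one habs hne
  have h2x := two_mul_eq_of_unit_root hxy hx hre him
  have hbound := abs_le.mp ((Complex.abs_re_le_norm lam).trans_eq habs)
  refine ⟨by linarith, by linarith, fun hden => ?_⟩
  rw [eq_div_iff hden]
  exact im_sq_mul_eq_of_unit_root hxy hx him h2x

/-- For `q ∈ [1,5]` and `z = c + id`: if some root `λ ≠ 1` of `X² - (z+3)X + (z+q+1) = 0`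
has modulus `1`, then `c ∈ [-(q+5)/2, -(q+1)/2]` and
`d² = -(c+q)²(2c+q+5)/(2c+q+1)` (provided `2c+q+1 ≠ 0`). -/
theorem stmt19 (q : ℝ) (hq1 : 1 ≤ q) (hq5 : q ≤ 5) (c d : ℝ) (lp lm lam : ℂ)
    (hroot : ∀ X : ℂ,
      X^2 - (((c:ℂ) + (d:ℂ)*Complex.I) + 3)*X
        + (((c:ℂ) + (d:ℂ)*Complex.I) + (q:ℂ) + 1) = (X - lp)*(X - lm))
    (hmem : lam = lp ∨ lam = lm) (habs : ‖lam‖ = 1) (hne : lam ≠ 1) :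
    -(q + 5)/2 ≤ c ∧ c ≤ -(q + 1)/2 ∧
    (2*c + q + 1 ≠ 0 → d^2 = -(c + q)^2*(2*c + q + 5)/(2*c + q + 1)) :=
  stmt19_general q c d lp lm lam hroot hmem habs hne
end
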